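/- Let (X,σ) be a shift space whose language 𝓛 admits a decomposition 𝓛 = 𝓒^p 𝓖 𝓒^s satisfying Conditions (I) and (II). Then for every γ ∈ (0,1) there exists C₉ > 0 such that for every measure of maximal entropy ν, every n ∈ ℕ, and every subset 𝓓_n ⊆ 𝓛_n with ν(⋃_{w∈𝓓_n} [w]) ≥ γ, one has #𝓓_n ≥ C₉ e^{n h(𝓛)}. -/

import Mathlib

open MeasureTheory Filter Topology
open scoped ENNReal

/-- The full two-sided shift on `p` symbols. -/
abbrev FullShift (p : ℕ) : Type := ℤ → Fin p

/-- The left shift map. -/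
def shiftMap {p : ℕ} : FullShift p → FullShift p := fun x n => x (n + 1)

/-- A (two-sided) shift space: a nonempty closed shift-invariant subset of the full shift. -/
def IsShiftSpace {p : ℕ} (X : Set (FullShift p)) : Prop :=
  X.Nonempty ∧ IsClosed X ∧ shiftMap '' X = X

/-- `x` spells the word `w` starting at position `k`. -/
def spellsAt {p : ℕ} (x : FullShift p) (k : ℤ) (w : List (Fin p)) : Prop :=
  ∀ i : Fin w.length, x (k + (i : ℕ)) = w.get i

/-- The language of a shift space: all finite words occurring in its sequences. -/
def language {p : ℕ} (X : Set (FullShift p)) : Set (List (Fin p)) :=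
  {w | ∃ x ∈ X, ∃ k : ℤ, spellsAt x k w}

/-- Words of length `n` in a collection `D`. -/
def wordsOfLen {p : ℕ} (D : Set (List (Fin p))) (n : ℕ) : Set (List (Fin p)) :=
  {w ∈ D | w.length = n}

/-- Exponential growth rate `h(D) = limsup (1/n) log #D_n` of a collection of words. -/
noncomputable def growth {p : ℕ} (D : Set (List (Fin p))) : ℝ :=
  Filter.atTop.limsup fun n : ℕ => Real.log ((wordsOfLen D n).ncard) / n

/-- Topological entropy of a shift space (= the growth rate of its language). -/
noncomputable def htop {p : ℕ} (X : Set (FullShift p)) : ℝ := growth (language X)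

/-- `glueWords m w v = w 0 ++ v 0 ++ w 1 ++ v 1 ++ ⋯ ++ v (m-1) ++ w m`. -/
def glueWords {p : ℕ} : ℕ → (ℕ → List (Fin p)) → (ℕ → List (Fin p)) → List (Fin p)
  | 0, w, _ => w 0
  | (m + 1), w, v => glueWords m w v ++ v m ++ w (m + 1)

/-- (S)-specification on `G ⊆ L` with gap size `t`. -/
def HasSpecS {p : ℕ} (L G : Set (List (Fin p))) (t : ℕ) : Prop :=
  ∀ (m : ℕ) (w : ℕ → List (Fin p)), (∀ i ≤ m, w i ∈ G) →
    ∃ v : ℕ → List (Fin p), (∀ i < m, v i ∈ L ∧ (v i).length = t) ∧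
      glueWords m w v ∈ L

/-- The central cylinder of a word `w`, starting at position `-⌊|w|/2⌋`. -/
def centralCylinder {p : ℕ} (w : List (Fin p)) : Set (FullShift p) :=
  {x | spellsAt x (-((w.length / 2 : ℕ) : ℤ)) w}

/-- (Per)-specification on `G` with gap size `t`: the glued word can moreover be realized by
a periodic point of period exactly `|x| + t`. -/
def HasSpecPer {p : ℕ} (X : Set (FullShift p)) (G : Set (List (Fin p))) (t : ℕ) : Prop :=
  ∀ (m : ℕ) (w : ℕ → List (Fin p)), (∀ i ≤ m, w i ∈ G) →
    ∃ v : ℕ → List (Fin p), (∀ i < m, v i ∈ language X ∧ (v i).length = t) ∧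
      glueWords m w v ∈ language X ∧
      ∃ z ∈ X, shiftMap^[(glueWords m w v).length + t] z = z ∧
        z ∈ centralCylinder (glueWords m w v)

/-- A decomposition `L = 𝓒ᵖ 𝓖 𝓒ˢ` of a language. -/
def Decomp {p : ℕ} (L Cp G Cs : Set (List (Fin p))) : Prop :=
  Cp ⊆ L ∧ G ⊆ L ∧ Cs ⊆ L ∧
    ∀ w ∈ L, ∃ u v x, u ∈ Cp ∧ v ∈ G ∧ x ∈ Cs ∧ w = u ++ v ++ x

/-- `𝓖(M)`: words of `L` decomposable with prefix and suffix of length at most `M`. -/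
def GM {p : ℕ} (L Cp G Cs : Set (List (Fin p))) (M : ℕ) : Set (List (Fin p)) :=
  {w ∈ L | ∃ u v x, u ∈ Cp ∧ v ∈ G ∧ x ∈ Cs ∧ u.length ≤ M ∧ x.length ≤ M ∧ w = u ++ v ++ x}

/-- Condition (III): uniformly controlled extension of words of `𝓖(M)` to words of `𝓖`. -/
def CondIII {p : ℕ} (L Cp G Cs : Set (List (Fin p))) : Prop :=
  ∀ M : ℕ, ∃ τ : ℕ, ∀ v ∈ GM L Cp G Cs M,
    ∃ u w : List (Fin p), u.length ≤ τ ∧ w.length ≤ τ ∧ u ++ v ++ w ∈ G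

/-- Shift invariance of a measure. -/
def ShiftInvariant {p : ℕ} (μ : Measure (FullShift p)) : Prop :=
  Measure.map shiftMap μ = μ

/-- Measure-theoretic (Kolmogorov–Sinai) entropy of a shift-invariant measure, computed via
the generating partitions into cylinders of length `n`. -/
noncomputable def entropyOf {p : ℕ} (μ : Measure (FullShift p)) : ℝ :=
  Filter.atTop.liminf fun n : ℕ =>
    (∑ w : Fin n → Fin p,
      Real.negMulLog (μ {x : FullShift p | ∀ i : Fin n, x ((i : ℕ) : ℤ) = w i}).toReal) / n

/-- `μ` is a measure of maximal entropy for the shift space `X`. -/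
def IsMME {p : ℕ} (X : Set (FullShift p)) (μ : Measure (FullShift p)) : Prop :=
  IsProbabilityMeasure μ ∧ ShiftInvariant μ ∧ μ X = 1 ∧ entropyOf μ = htop X

/-- A shift space is intrinsically ergodic if it has exactly one measure of maximal entropy. -/
def IntrinsicallyErgodic {p : ℕ} (X : Set (FullShift p)) : Prop :=
  ∃! μ : Measure (FullShift p), IsMME X μ

/-- The set of points of `X` periodic of period at most `n`. -/
def PerN {p : ℕ} (X : Set (FullShift p)) (n : ℕ) : Set (FullShift p) :=
  {x ∈ X | ∃ k, 1 ≤ k ∧ k ≤ n ∧ shiftMap^[k] x = x}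

/-- The measure evenly distributed on the periodic points of period at most `n`. -/
noncomputable def perMeasure {p : ℕ} (X : Set (FullShift p)) (n : ℕ) :
    Measure (FullShift p) :=
  (((PerN X n).ncard : ℝ≥0∞))⁻¹ •
    Measure.sum (fun x : (PerN X n) => Measure.dirac (x : FullShift p))

/-- Weak* convergence of a sequence of measures. -/
def WeakStarLimit {p : ℕ} (μs : ℕ → Measure (FullShift p)) (μ : Measure (FullShift p)) : Prop :=
  ∀ f : C(FullShift p, ℝ),
    Tendsto (fun n => ∫ x, f x ∂(μs n)) atTop (𝓝 (∫ x, f x ∂μ))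

/-- `Y` is a subshift factor of `X`. -/
def IsSubshiftFactor {p q : ℕ} (X : Set (FullShift p)) (Y : Set (FullShift q)) : Prop :=
  IsShiftSpace Y ∧ ∃ π : FullShift p → FullShift q,
    Continuous π ∧ π '' X = Y ∧ ∀ x ∈ X, π (shiftMap x) = shiftMap (π x)

/-!
Conditions (I) and (II) give the upper bound `#𝓛_n ≤ C e^{n h}`, `h = h(𝓛)`. Gluing `m + 1`
words of `𝓖_n` by specification gives `#𝓖_n ^ (m + 1) ≤ #𝓛_{(m + 1)(n + t)}`, hence
`#𝓖_n ≤ e^{(n + t) h}`. Weighting words of length `i` by `e^{-i h}`, the collections `𝓒ᵖ` and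
`𝓒ˢ` have summable weight by (II), so `𝓛 = 𝓒ᵖ 𝓖 𝓒ˢ` bounds the weight of `𝓛_n` by a constant.

For a measure of maximal entropy `ν`, the entropy `H_n(ν)` of the partition into cylinders of
length `n` is subadditive by shift invariance, so `n h ≤ H_n(ν)` by Fekete's lemma. If `𝓓_n`
carries mass `s ≥ γ`, then `H_n(ν) ≤ s log #𝓓_n + (1 - s) log #𝓛_n + 2`, and with the upper bound
this forces `log #𝓓_n ≥ n h - (log C + 2) / γ`.
-/

section Generic

variable {u : ℕ → ℝ}

lemma log_natCast_le_log_natCast {a b : ℕ} (h : a ≤ b) : Real.log a ≤ Real.log b := by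
  rcases Nat.eq_zero_or_pos a with rfl | ha
  · simpa using Real.log_natCast_nonneg b
  · exact Real.log_le_log (by exact_mod_cast ha) (by exact_mod_cast h)

lemma bddBelow_range_div_of_nonneg (h0 : ∀ n, 0 ≤ u n) :
    BddBelow (Set.range fun n => u n / n) :=
  ⟨0, by rintro _ ⟨n, rfl⟩; exact div_nonneg (h0 n) n.cast_nonneg⟩

lemma Subadditive.natCast_mul_lim_le (hu : Subadditive u) (h0 : ∀ n, 0 ≤ u n) (n : ℕ) :
    n * hu.lim ≤ u n := by
  rcases Nat.eq_zero_or_pos n with rfl | hn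
  · simpa using h0 0
  · have := hu.lim_le_div (bddBelow_range_div_of_nonneg h0) hn.ne'
    rwa [le_div_iff₀ (by exact_mod_cast hn), mul_comm] at this

lemma le_mul_of_tendsto_div {h a : ℝ} {K : ℕ} (hK : 0 < K)
    (hu : Tendsto (fun N : ℕ => u N / N) atTop (𝓝 h))
    (ha : ∀ m : ℕ, (m + 1 : ℝ) * a ≤ u ((m + 1) * K)) : a ≤ K * h := by
  have hK' : (0 : ℝ) < K := by exact_mod_cast hK
  have hsub : Tendsto (fun m : ℕ => (m + 1) * K) atTop atTop :=
    tendsto_atTop_mono (fun m => Nat.le_mul_of_pos_right _ hK) (tendsto_add_atTop_nat 1)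
  have hlim : a / K ≤ h := ge_of_tendsto (hu.comp hsub) <| Eventually.of_forall fun m => by
    have hm : (0 : ℝ) < m + 1 := by positivity
    simp only [Function.comp_apply, Nat.cast_mul, Nat.cast_add, Nat.cast_one]
    rw [div_le_div_iff₀ hK' (by positivity)]
    nlinarith [ha m]
  rwa [div_le_iff₀ hK', mul_comm] at hlim

end Generic

section Shift

variable {p : ℕ}

lemma shiftMap_iterate_apply (x : FullShift p) (k : ℕ) (n : ℤ) :
    (shiftMap^[k] x) n = x (n + k) := by
  induction k generalizing n with
  | zero => simp
  | succ k ih =>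
    rw [Function.iterate_succ_apply', shiftMap, ih]
    push_cast
    ring_nf

lemma measurable_shiftMap : Measurable (shiftMap (p := p)) :=
  measurable_pi_lambda _ fun _ => measurable_pi_apply _

lemma ShiftInvariant.measurePreserving {μ : Measure (FullShift p)} (h : ShiftInvariant μ) :
    MeasurePreserving shiftMap μ μ :=
  ⟨measurable_shiftMap, h⟩

lemma spellsAt_iff {x : FullShift p} {k : ℤ} {w : List (Fin p)} :
    spellsAt x k w ↔ ∀ (i : ℕ) (hi : i < w.length), x (k + i) = w[i] :=
  ⟨fun h i hi => h ⟨i, hi⟩, fun h i => h i i.2⟩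

lemma spellsAt_append {x : FullShift p} {k : ℤ} {u v : List (Fin p)} :
    spellsAt x k (u ++ v) ↔ spellsAt x k u ∧ spellsAt x (k + u.length) v := by
  simp only [spellsAt_iff, List.length_append]
  constructor
  · intro h
    refine ⟨fun i hi => by simpa [List.getElem_append_left hi] using h i (by omega),
      fun i hi => ?_⟩
    simpa [add_assoc] using h (u.length + i) (by omega)
  · rintro ⟨hu, hv⟩ i hi
    rcases lt_or_ge i u.length with hiu | hiu
    · simpa [List.getElem_append_left hiu] using hu i hiu
    · rw [List.getElem_append_right hiu]
      simpa [add_assoc, Nat.cast_sub hiu] using hv (i - u.length) (by omega)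

lemma spellsAt_shiftMap_iterate {x : FullShift p} {j : ℕ} {k : ℤ} {w : List (Fin p)} :
    spellsAt (shiftMap^[j] x) k w ↔ spellsAt x (k + j) w := by
  simp only [spellsAt_iff, shiftMap_iterate_apply, add_right_comm]

lemma measurableSet_setOf_spellsAt (k : ℤ) (w : List (Fin p)) :
    MeasurableSet {x : FullShift p | spellsAt x k w} := by
  simp only [spellsAt, Set.ofPred_forall]
  exact .iInter fun i => measurable_pi_apply _ (measurableSet_singleton _)

end Shift

section Language

variable {p : ℕ} {X : Set (FullShift p)}

lemma mem_language_of_append_mem {u v : List (Fin p)} (h : u ++ v ∈ language X) :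
    u ∈ language X ∧ v ∈ language X := by
  obtain ⟨x, hx, k, hs⟩ := h
  rw [spellsAt_append] at hs
  exact ⟨⟨x, hx, k, hs.1⟩, ⟨x, hx, _, hs.2⟩⟩

lemma exists_append_singleton_mem_language {w : List (Fin p)} (h : w ∈ language X) :
    ∃ a, w ++ [a] ∈ language X := by
  obtain ⟨x, hx, k, hs⟩ := h
  refine ⟨x (k + w.length), x, hx, k, spellsAt_append.2 ⟨hs, fun i => ?_⟩⟩
  obtain ⟨_ | _, hi⟩ := i
  · simp
  · simp at hi

lemma mem_range_ofFn {α : Type*} {n : ℕ} {l : List α} (h : l.length = n) :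
    l ∈ Set.range (List.ofFn : (Fin n → α) → List α) := by
  subst h
  exact ⟨_, List.ofFn_getElem⟩

lemma ncard_preimage_ofFn {D : Set (List (Fin p))} {n : ℕ} (hD : ∀ l ∈ D, l.length = n) :
    (List.ofFn ⁻¹' D : Set (Fin n → Fin p)).ncard = D.ncard :=
  Set.ncard_preimage_of_injective_subset_range List.ofFn_injective fun _ hl =>
    mem_range_ofFn (hD _ hl)

lemma finite_wordsOfLen (D : Set (List (Fin p))) (n : ℕ) : (wordsOfLen D n).Finite :=
  (List.finite_length_eq (Fin p) n).subset fun _ hw => hw.2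

lemma ncard_wordsOfLen_mono {D E : Set (List (Fin p))} (h : D ⊆ E) (n : ℕ) :
    (wordsOfLen D n).ncard ≤ (wordsOfLen E n).ncard :=
  Set.ncard_le_ncard (fun _ hw => ⟨h hw.1, hw.2⟩) (finite_wordsOfLen E n)

lemma ncard_wordsOfLen_le_pow (D : Set (List (Fin p))) (n : ℕ) :
    (wordsOfLen D n).ncard ≤ p ^ n := by
  rw [← ncard_preimage_ofFn fun _ hw => hw.2]
  calc _ ≤ (Set.univ : Set (Fin n → Fin p)).ncard := Set.ncard_le_ncard (Set.subset_univ _)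
    _ = p ^ n := by simp [Set.ncard_univ]

lemma log_ncard_wordsOfLen_le (D : Set (List (Fin p))) (n : ℕ) :
    Real.log (wordsOfLen D n).ncard ≤ n * Real.log p := by
  rw [← Real.log_pow, ← Nat.cast_pow]
  exact log_natCast_le_log_natCast (ncard_wordsOfLen_le_pow D n)

lemma ncard_wordsOfLen_language_mono :
    Monotone fun n => (wordsOfLen (language X) n).ncard := by
  refine monotone_nat_of_le_succ fun n => ?_
  choose a ha using fun w (hw : w ∈ wordsOfLen (language X) n) =>
    exists_append_singleton_mem_language hw.1
  classical
  refine Set.ncard_le_ncard_of_injOn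
    (fun w => if hw : w ∈ wordsOfLen (language X) n then w ++ [a w hw] else w)
    (fun w hw => ?_) (fun w hw w' hw' h => ?_) (finite_wordsOfLen _ _)
  · simp only [dif_pos hw]
    exact ⟨ha w hw, by simp [hw.2]⟩
  · simp only [dif_pos hw, dif_pos hw'] at h
    exact (List.append_inj h (hw.2.trans hw'.2.symm)).1

lemma ncard_wordsOfLen_language_add_le (m n : ℕ) :
    (wordsOfLen (language X) (m + n)).ncard ≤
      (wordsOfLen (language X) m).ncard * (wordsOfLen (language X) n).ncard := by
  have hsub : wordsOfLen (language X) (m + n) ⊆ (fun uv : List (Fin p) × List (Fin p) =>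
      uv.1 ++ uv.2) '' (wordsOfLen (language X) m ×ˢ wordsOfLen (language X) n) := by
    rintro w ⟨hw, hlen⟩
    rw [← List.take_append_drop m w] at hw
    have h := mem_language_of_append_mem hw
    refine ⟨(w.take m, w.drop m), ⟨⟨h.1, ?_⟩, h.2, ?_⟩, List.take_append_drop m w⟩ <;>
      simp [hlen]
  have hfin := (finite_wordsOfLen (language X) m).prod (finite_wordsOfLen (language X) n)
  calc _ ≤ _ := Set.ncard_le_ncard hsub (hfin.image _)
    _ ≤ _ := Set.ncard_image_le hfin
    _ = _ := Set.ncard_prod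

lemma subadditive_log_ncard (X : Set (FullShift p)) :
    Subadditive fun n => Real.log (wordsOfLen (language X) n).ncard := by
  intro m n
  rcases Nat.eq_zero_or_pos (wordsOfLen (language X) (m + n)).ncard with h0 | hpos
  · simp only [h0, Nat.cast_zero, Real.log_zero]
    positivity
  · have hle := ncard_wordsOfLen_language_add_le (X := X) m n
    have hm : (wordsOfLen (language X) m).ncard ≠ 0 := by
      intro h; rw [h, zero_mul] at hle; omega
    have hn : (wordsOfLen (language X) n).ncard ≠ 0 := by
      intro h; rw [h, mul_zero] at hle; omega
    rw [← Real.log_mul (by exact_mod_cast hm) (by exact_mod_cast hn), ← Nat.cast_mul]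
    exact log_natCast_le_log_natCast hle

lemma tendsto_log_ncard_div_htop (X : Set (FullShift p)) :
    Tendsto (fun n : ℕ => Real.log (wordsOfLen (language X) n).ncard / n) atTop
      (𝓝 (htop X)) := by
  have hu := subadditive_log_ncard X
  have h := hu.tendsto_lim (bddBelow_range_div_of_nonneg fun n => Real.log_natCast_nonneg _)
  rwa [htop, growth, h.limsup_eq]

end Language

section Specification

variable {p : ℕ} {X : Set (FullShift p)}

lemma length_glueWords {m n t : ℕ} {w v : ℕ → List (Fin p)}
    (hw : ∀ i ≤ m, (w i).length = n) (hv : ∀ i < m, (v i).length = t) :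
    (glueWords m w v).length = (m + 1) * n + m * t := by
  induction m with
  | zero => simp [glueWords, hw 0 le_rfl]
  | succ m ih =>
    simp only [glueWords, List.length_append, ih (fun i hi => hw i (by omega))
      (fun i hi => hv i (by omega)), hv m (by omega), hw (m + 1) le_rfl]
    ring

lemma eq_of_glueWords_eq {m n t : ℕ} {w w' v v' : ℕ → List (Fin p)}
    (hw : ∀ i ≤ m, (w i).length = n) (hw' : ∀ i ≤ m, (w' i).length = n)
    (hv : ∀ i < m, (v i).length = t) (hv' : ∀ i < m, (v' i).length = t)
    (h : glueWords m w v = glueWords m w' v') : ∀ i ≤ m, w i = w' i := by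
  induction m with
  | zero =>
    intro i hi
    obtain rfl : i = 0 := by omega
    exact h
  | succ m ih =>
    have hG : (glueWords m w v).length = (glueWords m w' v').length := by
      rw [length_glueWords (fun i hi => hw i (by omega)) (fun i hi => hv i (by omega)),
        length_glueWords (fun i hi => hw' i (by omega)) (fun i hi => hv' i (by omega))]
    obtain ⟨h1, hlast⟩ := List.append_inj h (by
      simp only [List.length_append, hG, hv m (by omega), hv' m (by omega)])
    have hinit := (List.append_inj h1 hG).1
    intro i hi
    rcases Nat.lt_or_ge i (m + 1) with hi' | hi'
    · exact ih (fun i hi => hw i (by omega)) (fun i hi => hw' i (by omega))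
        (fun i hi => hv i (by omega)) (fun i hi => hv' i (by omega)) hinit i (by omega)
    · obtain rfl : i = m + 1 := by omega
      exact hlast

lemma HasSpecS.ncard_pow_le {G : Set (List (Fin p))} {t : ℕ}
    (hspec : HasSpecS (language X) G t) (n m : ℕ) :
    (wordsOfLen G n).ncard ^ (m + 1) ≤
      (wordsOfLen (language X) ((m + 1) * n + m * t)).ncard := by
  let blocks (f : Fin (m + 1) → wordsOfLen G n) (i : ℕ) : List (Fin p) :=
    if hi : i < m + 1 then f ⟨i, hi⟩ else []
  have hlen : ∀ f, ∀ i ≤ m, (blocks f i).length = n := fun f i hi => by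
    simp only [blocks, dif_pos (Nat.lt_succ_of_le hi)]
    exact (f _).2.2
  choose v hv hvL using fun f => hspec m (blocks f) fun i hi => by
    simp only [blocks, dif_pos (Nat.lt_succ_of_le hi)]
    exact (f _).2.1
  let glue (f : Fin (m + 1) → wordsOfLen G n) :
      wordsOfLen (language X) ((m + 1) * n + m * t) :=
    ⟨glueWords m (blocks f) (v f), hvL f, length_glueWords (hlen f) fun i hi => (hv f i hi).2⟩
  have hinj : Function.Injective glue := fun f f' h => funext fun i => Subtype.ext <| by
    have := eq_of_glueWords_eq (hlen f) (hlen f') (fun j hj => (hv f j hj).2)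
      (fun j hj => (hv f' j hj).2) (congrArg Subtype.val h) i (Nat.le_of_lt_succ i.2)
    simpa [blocks, Nat.lt_succ_iff.mp i.2] using this
  have := (finite_wordsOfLen (language X) ((m + 1) * n + m * t)).to_subtype
  simpa [Nat.card_fun, Nat.card_coe_set_eq] using Nat.card_le_card_of_injective glue hinj

lemma HasSpecS.ncard_le_exp {G : Set (List (Fin p))} {t : ℕ}
    (hspec : HasSpecS (language X) G t) (n : ℕ) :
    ((wordsOfLen G n).ncard : ℝ) ≤ Real.exp ((n + t) * htop X) := by
  rcases Nat.eq_zero_or_pos (n + t) with hnt | hnt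
  · obtain ⟨rfl, rfl⟩ : n = 0 ∧ t = 0 := by omega
    simpa using ncard_wordsOfLen_le_pow G 0
  have key : Real.log (wordsOfLen G n).ncard ≤ ((n + t : ℕ) : ℝ) * htop X := by
    refine le_mul_of_tendsto_div hnt (tendsto_log_ncard_div_htop X) fun m => ?_
    calc (m + 1 : ℝ) * Real.log (wordsOfLen G n).ncard
        = Real.log ((wordsOfLen G n).ncard ^ (m + 1) : ℕ) := by push_cast [Real.log_pow]; ring
      _ ≤ Real.log (wordsOfLen (language X) ((m + 1) * (n + t))).ncard :=
        log_natCast_le_log_natCast <| (hspec.ncard_pow_le n m).trans <|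
          ncard_wordsOfLen_language_mono (by nlinarith)
  calc ((wordsOfLen G n).ncard : ℝ) ≤ Real.exp (Real.log (wordsOfLen G n).ncard) :=
      Real.le_exp_log _
    _ ≤ Real.exp ((n + t) * htop X) := Real.exp_le_exp.2 (by exact_mod_cast key)

end Specification

section Decomposition

open Finset

variable {p : ℕ} {X : Set (FullShift p)}

lemma sum_antidiagonal_antidiagonal_le {x y z : ℕ → ℝ} {B : ℝ} (hx : ∀ i, 0 ≤ x i)
    (hy : ∀ j, 0 ≤ y j) (hyB : ∀ j, y j ≤ B) (hz : ∀ k, 0 ≤ z k) (hxs : Summable x)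
    (hzs : Summable z) (n : ℕ) :
    ∑ im ∈ antidiagonal n, ∑ jk ∈ antidiagonal im.2, x im.1 * y jk.1 * z jk.2 ≤
      (∑' i, x i) * B * ∑' k, z k := by
  have hB : 0 ≤ B := (hy 0).trans (hyB 0)
  have hinner : ∀ m, ∑ jk ∈ antidiagonal m, y jk.1 * z jk.2 ≤ B * ∑' k, z k := fun m =>
    calc _ ≤ ∑ jk ∈ antidiagonal m, B * z jk.2 :=
          sum_le_sum fun jk _ => mul_le_mul_of_nonneg_right (hyB _) (hz _)
      _ = B * ∑ k ∈ range (m + 1), z k := by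
          rw [← mul_sum, ← Nat.sum_antidiagonal_swap]
          simp only [Prod.snd_swap]
          rw [Nat.sum_antidiagonal_eq_sum_range_succ fun k _ => z k]
      _ ≤ B * ∑' k, z k := mul_le_mul_of_nonneg_left (hzs.sum_le_tsum _ fun k _ => hz k) hB
  calc _ = ∑ im ∈ antidiagonal n, x im.1 * ∑ jk ∈ antidiagonal im.2, y jk.1 * z jk.2 := by
        simp only [mul_sum, mul_assoc]
    _ ≤ ∑ im ∈ antidiagonal n, x im.1 * (B * ∑' k, z k) :=
        sum_le_sum fun im _ => mul_le_mul_of_nonneg_left (hinner _) (hx _)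
    _ = (∑ i ∈ range (n + 1), x i) * (B * ∑' k, z k) := by
        rw [Nat.sum_antidiagonal_eq_sum_range_succ fun i _ => x i * (B * ∑' k, z k), sum_mul]
    _ ≤ (∑' i, x i) * (B * ∑' k, z k) :=
        mul_le_mul_of_nonneg_right (hxs.sum_le_tsum _ fun i _ => hx i)
          (mul_nonneg hB (tsum_nonneg hz))
    _ = _ := (mul_assoc _ _ _).symm

lemma ncard_wordsOfLen_le_sum_decomp {Cp G Cs : Set (List (Fin p))}
    (hdec : Decomp (language X) Cp G Cs) (n : ℕ) :
    (wordsOfLen (language X) n).ncard ≤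
      ∑ im ∈ antidiagonal n, ∑ jk ∈ antidiagonal im.2,
        (wordsOfLen Cp im.1).ncard * (wordsOfLen G jk.1).ncard * (wordsOfLen Cs jk.2).ncard := by
  let pieces (i j k : ℕ) : Set (List (Fin p) × List (Fin p) × List (Fin p)) :=
    wordsOfLen Cp i ×ˢ wordsOfLen G j ×ˢ wordsOfLen Cs k
  let concat (uvx : List (Fin p) × List (Fin p) × List (Fin p)) := uvx.1 ++ uvx.2.1 ++ uvx.2.2
  have hfin : ∀ i j k, (pieces i j k).Finite := fun i j k =>
    (finite_wordsOfLen _ _).prod ((finite_wordsOfLen _ _).prod (finite_wordsOfLen _ _))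
  have hsub : wordsOfLen (language X) n ⊆
      ⋃ im ∈ antidiagonal n, ⋃ jk ∈ antidiagonal im.2, concat '' pieces im.1 jk.1 jk.2 := by
    rintro w ⟨hw, rfl⟩
    obtain ⟨u, v, x, hu, hv, hx, rfl⟩ := hdec.2.2.2 w hw
    simp only [Set.mem_iUnion, HasAntidiagonal.mem_antidiagonal, exists_prop]
    exact ⟨(u.length, v.length + x.length), by simp, (v.length, x.length), rfl,
      (u, v, x), ⟨⟨hu, rfl⟩, ⟨hv, rfl⟩, ⟨hx, rfl⟩⟩, rfl⟩
  calc _ ≤ (⋃ im ∈ antidiagonal n, ⋃ jk ∈ antidiagonal im.2,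
        concat '' pieces im.1 jk.1 jk.2).ncard :=
      Set.ncard_le_ncard hsub <| (finite_toSet _).biUnion fun im _ =>
        (finite_toSet _).biUnion fun jk _ => (hfin _ _ _).image _
    _ ≤ _ := (set_ncard_biUnion_le _ _).trans <| sum_le_sum fun im _ =>
      (set_ncard_biUnion_le _ _).trans <| sum_le_sum fun jk _ =>
        (Set.ncard_image_le (hfin _ _ _)).trans_eq <| by simp [pieces, Set.ncard_prod, mul_assoc]

lemma summable_ncard_mul_exp_neg_of_growth_lt {D : Set (List (Fin p))} {h : ℝ}
    (hD : growth D < h) :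
    Summable fun i : ℕ => ((wordsOfLen D i).ncard : ℝ) * Real.exp (-(i * h)) := by
  obtain ⟨a, hDa, hah⟩ := exists_between hD
  have hbdd : IsBoundedUnder (· ≤ ·) atTop
      fun n : ℕ => Real.log (wordsOfLen D n).ncard / n :=
    ⟨Real.log p, eventually_map.2 <| .of_forall fun n =>
      div_le_of_le_mul₀ n.cast_nonneg (Real.log_natCast_nonneg p)
        ((log_ncard_wordsOfLen_le D n).trans_eq (mul_comm _ _))⟩
  refine .of_norm_bounded_eventually_nat (summable_geometric_of_lt_one (Real.exp_pos _).le
    (Real.exp_lt_one_iff.2 (sub_neg.2 hah))) ?_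
  filter_upwards [eventually_lt_of_limsup_lt hDa hbdd, eventually_gt_atTop 0] with i hi hi0
  have hlog : Real.log (wordsOfLen D i).ncard ≤ i * a := by
    rw [div_lt_iff₀ (by exact_mod_cast hi0)] at hi
    linarith
  rw [Real.norm_of_nonneg (by positivity), ← Real.exp_nat_mul, mul_sub, Real.exp_sub,
    div_eq_mul_inv, ← Real.exp_neg]
  exact mul_le_mul_of_nonneg_right ((Real.le_exp_log _).trans (Real.exp_le_exp.2 hlog))
    (Real.exp_pos _).le

lemma exists_ncard_wordsOfLen_le_mul_exp {Cp G Cs : Set (List (Fin p))}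
    (hdec : Decomp (language X) Cp G Cs) (hI : ∃ t : ℕ, HasSpecS (language X) G t)
    (hII : growth (Cp ∪ Cs) < htop X) :
    ∃ C : ℝ, 1 ≤ C ∧ ∀ n : ℕ,
      ((wordsOfLen (language X) n).ncard : ℝ) ≤ C * Real.exp (n * htop X) := by
  obtain ⟨t, hspec⟩ := hI
  set h := htop X
  let weight (D : Set (List (Fin p))) (i : ℕ) : ℝ :=
    (wordsOfLen D i).ncard * Real.exp (-(i * h))
  have hweight : ∀ D i, 0 ≤ weight D i := fun D i => by positivity
  have hsummable : ∀ {D}, D ⊆ Cp ∪ Cs → Summable (weight D) := fun hD =>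
    (summable_ncard_mul_exp_neg_of_growth_lt hII).of_nonneg_of_le (hweight _) fun i =>
      mul_le_mul_of_nonneg_right (by exact_mod_cast ncard_wordsOfLen_mono hD i)
        (Real.exp_pos _).le
  have hG : ∀ j, weight G j ≤ Real.exp (t * h) := fun j =>
    calc weight G j ≤ Real.exp ((j + t) * h) * Real.exp (-(j * h)) :=
          mul_le_mul_of_nonneg_right (hspec.ncard_le_exp j) (Real.exp_pos _).le
      _ = Real.exp (t * h) := by rw [← Real.exp_add]; ring_nf
  refine ⟨max ((∑' i, weight Cp i) * Real.exp (t * h) * ∑' k, weight Cs k) 1, le_max_right _ _,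
    fun n => ?_⟩
  calc ((wordsOfLen (language X) n).ncard : ℝ)
      ≤ ∑ im ∈ antidiagonal n, ∑ jk ∈ antidiagonal im.2, ((wordsOfLen Cp im.1).ncard : ℝ) *
          (wordsOfLen G jk.1).ncard * (wordsOfLen Cs jk.2).ncard := by
        exact_mod_cast ncard_wordsOfLen_le_sum_decomp hdec n
    _ = Real.exp (n * h) * ∑ im ∈ antidiagonal n, ∑ jk ∈ antidiagonal im.2,
          weight Cp im.1 * weight G jk.1 * weight Cs jk.2 := by
        simp only [mul_sum]
        refine sum_congr rfl fun im him => sum_congr rfl fun jk hjk => ?_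
        rw [HasAntidiagonal.mem_antidiagonal] at him hjk
        rw [← him, ← hjk]
        simp only [weight, Real.exp_neg, Nat.cast_add, add_mul, Real.exp_add]
        field_simp
    _ ≤ Real.exp (n * h) * ((∑' i, weight Cp i) * Real.exp (t * h) * ∑' k, weight Cs k) :=
        mul_le_mul_of_nonneg_left (sum_antidiagonal_antidiagonal_le (hweight _) (hweight _) hG
          (hweight _) (hsummable Set.subset_union_left) (hsummable Set.subset_union_right) n)
          (Real.exp_pos _).le
    _ ≤ _ := by
        rw [mul_comm]
        exact mul_le_mul_of_nonneg_right (le_max_left _ _) (Real.exp_pos _).le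

end Decomposition

section PartitionEntropy

open Finset Function Real

variable {α β ι κ : Type*} [MeasurableSpace α]

structure IsMeasurablePartition (s : ι → Set α) : Prop where
  measurableSet : ∀ i, MeasurableSet (s i)
  pairwise_disjoint : Pairwise (Disjoint on s)
  iUnion_eq_univ : ⋃ i, s i = Set.univ

lemma IsMeasurablePartition.preimage [MeasurableSpace β] {s : ι → Set α}
    (hs : IsMeasurablePartition s) {f : β → α} (hf : Measurable f) :
    IsMeasurablePartition fun i => f ⁻¹' s i :=
  ⟨fun i => hf (hs.measurableSet i), fun _ _ hij => (hs.pairwise_disjoint hij).preimage f,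
    by rw [← Set.preimage_iUnion, hs.iUnion_eq_univ, Set.preimage_univ]⟩

lemma IsMeasurablePartition.sum_measure_inter [Fintype ι] {s : ι → Set α}
    (hs : IsMeasurablePartition s) (μ : Measure α) [IsFiniteMeasure μ] {A : Set α}
    (hA : MeasurableSet A) : ∑ i, (μ (A ∩ s i)).toReal = (μ A).toReal := by
  have h := measure_iUnion (μ := μ) (fun _ _ hij => (hs.pairwise_disjoint hij).mono
    Set.inter_subset_right Set.inter_subset_right) fun i => hA.inter (hs.measurableSet i)
  rw [tsum_fintype, ← Set.inter_iUnion, hs.iUnion_eq_univ, Set.inter_univ] at h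
  rw [← ENNReal.toReal_sum fun i _ => measure_ne_top μ _, h]

noncomputable def partitionEntropy [Fintype ι] (μ : Measure α) (s : ι → Set α) : ℝ :=
  ∑ i, negMulLog (μ (s i)).toReal

lemma partitionEntropy_preimage [Fintype ι] [MeasurableSpace β] {μ : Measure β}
    {ν : Measure α} {f : β → α} (hf : MeasurePreserving f μ ν) {s : ι → Set α}
    (hs : ∀ i, MeasurableSet (s i)) :
    partitionEntropy μ (fun i => f ⁻¹' s i) = partitionEntropy ν s := by
  simp only [partitionEntropy, hf.measure_preimage (hs _).nullMeasurableSet]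

lemma sum_negMulLog_le (s : Finset ι) {q : ι → ℝ} (hq : ∀ i ∈ s, 0 ≤ q i) :
    ∑ i ∈ s, negMulLog (q i) ≤ (∑ i ∈ s, q i) * log #s + negMulLog (∑ i ∈ s, q i) := by
  rcases s.eq_empty_or_nonempty with rfl | hs
  · simp
  have hc : (0 : ℝ) < #s := by exact_mod_cast hs.card_pos
  have hJensen := concaveOn_negMulLog.le_map_sum (t := s) (w := fun _ => (#s : ℝ)⁻¹)
    (fun _ _ => by positivity) (by simp [hc.ne']) hq
  simp only [smul_eq_mul, ← mul_sum] at hJensen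
  refine le_of_mul_le_mul_left (hJensen.trans_eq ?_) (inv_pos.2 hc)
  rw [negMulLog_mul, negMulLog, log_inv]
  ring

/-- Conditioning on the row: the chain rule splits off the row entropy, and concavity of
`negMulLog` bounds the conditional entropy by the column entropy. -/
lemma sum_sum_negMulLog_le [Fintype ι] [Fintype κ] (P : ι → κ → ℝ) (hP : ∀ i j, 0 ≤ P i j)
    (hsum : ∑ i, ∑ j, P i j = 1) :
    ∑ i, ∑ j, negMulLog (P i j) ≤
      ∑ i, negMulLog (∑ j, P i j) + ∑ j, negMulLog (∑ i, P i j) := by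
  set r := fun i => ∑ j, P i j
  have hr : ∀ i, 0 ≤ r i := fun i => sum_nonneg fun j _ => hP i j
  have hP0 : ∀ i j, r i = 0 → P i j = 0 := fun i j h =>
    le_antisymm (h ▸ single_le_sum (fun j _ => hP i j) (mem_univ j)) (hP i j)
  have hcancel : ∀ i j, r i * (P i j / r i) = P i j := fun i j => by
    rcases eq_or_ne (r i) 0 with h | h
    · simp [h, hP0 i j h]
    · exact mul_div_cancel₀ _ h
  have hchain : ∀ i j, negMulLog (P i j) =
      P i j / r i * negMulLog (r i) + r i * negMulLog (P i j / r i) := fun i j => by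
    rw [← negMulLog_mul, hcancel]
  have hrow : ∀ i, ∑ j, P i j / r i * negMulLog (r i) = negMulLog (r i) := fun i => by
    rw [← sum_mul, ← sum_div]
    rcases eq_or_ne (r i) 0 with h | h
    · simp [h]
    · rw [div_self h, one_mul]
  have hcol : ∀ j, ∑ i, r i * negMulLog (P i j / r i) ≤ negMulLog (∑ i, P i j) := fun j => by
    simpa only [smul_eq_mul, hcancel] using concaveOn_negMulLog.le_map_sum (t := univ)
      (w := r) (p := fun i => P i j / r i) (fun i _ => hr i) hsum
      fun i _ => Set.mem_Ici.2 (div_nonneg (hP i j) (hr i))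
  calc ∑ i, ∑ j, negMulLog (P i j)
      = ∑ i, negMulLog (r i) + ∑ j, ∑ i, r i * negMulLog (P i j / r i) := by
        simp only [hchain, sum_add_distrib, hrow]
        rw [sum_comm (γ := κ)]
    _ ≤ _ := add_le_add_right (sum_le_sum fun j _ => hcol j) _

lemma partitionEntropy_inter_le [Fintype ι] [Fintype κ] (μ : Measure α) [IsProbabilityMeasure μ]
    {s : ι → Set α} {t : κ → Set α} (hs : IsMeasurablePartition s)
    (ht : IsMeasurablePartition t) :
    partitionEntropy μ (fun ij : ι × κ => s ij.1 ∩ t ij.2) ≤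
      partitionEntropy μ s + partitionEntropy μ t := by
  have hrow : ∀ i, ∑ j, (μ (s i ∩ t j)).toReal = (μ (s i)).toReal := fun i =>
    ht.sum_measure_inter μ (hs.measurableSet i)
  have hcol : ∀ j, ∑ i, (μ (s i ∩ t j)).toReal = (μ (t j)).toReal := fun j => by
    simpa only [Set.inter_comm] using hs.sum_measure_inter μ (ht.measurableSet j)
  have htot : ∑ i, ∑ j, (μ (s i ∩ t j)).toReal = 1 := by
    simpa [hrow] using hs.sum_measure_inter μ MeasurableSet.univ
  simpa only [partitionEntropy, Fintype.sum_prod_type, hrow, hcol] using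
    sum_sum_negMulLog_le _ (fun _ _ => ENNReal.toReal_nonneg) htot

lemma sum_negMulLog_le_of_subset [Fintype ι] {f : ι → ℝ} (hf : ∀ i, 0 ≤ f i) (hf1 : ∑ i, f i = 1)
    {S T : Finset ι} (hST : S ⊆ T) (hT : ∀ i ∉ T, f i = 0) :
    ∑ i, negMulLog (f i) ≤
      (∑ i ∈ S, f i) * log #S + (1 - ∑ i ∈ S, f i) * log #T + 2 := by
  classical
  have hnegMulLog_le_one : ∀ x : ℝ, 0 ≤ x → negMulLog x ≤ 1 := fun x hx =>
    (negMulLog_le_one_sub_self hx).trans (by linarith)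
  have hsumT : ∀ g : ι → ℝ, (∀ i ∉ T, g i = 0) → ∑ i ∈ T, g i = ∑ i, g i := fun g hg =>
    sum_subset (subset_univ T) fun i _ hi => hg i hi
  have hrest : ∑ i ∈ T \ S, f i = 1 - ∑ i ∈ S, f i := by
    rw [← hf1, ← hsumT f hT, ← sum_sdiff hST, add_sub_cancel_right]
  have hrest0 : 0 ≤ 1 - ∑ i ∈ S, f i := hrest ▸ sum_nonneg fun i _ => hf i
  have hS := sum_negMulLog_le S fun i _ => hf i
  have hTS := sum_negMulLog_le (T \ S) fun i _ => hf i
  have hlog : log #(T \ S) ≤ log #T := log_natCast_le_log_natCast (card_le_card sdiff_subset)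
  rw [hrest] at hTS
  rw [← hsumT _ fun i hi => by simp [hT i hi], ← sum_sdiff hST]
  nlinarith [hnegMulLog_le_one _ (sum_nonneg fun i (_ : i ∈ S) => hf i),
    hnegMulLog_le_one _ hrest0]

/-- Per unit of mass, `S` contributes at most `log #S` to the entropy and `T \ S` at most
`log #T ≤ a + K`, so mass `γ` on `S` forces `log #S ≥ a - (K + 2) / γ`. -/
lemma exp_mul_exp_le_card_of_mass [Fintype ι] {f : ι → ℝ} (hf : ∀ i, 0 ≤ f i) (hf1 : ∑ i, f i = 1)
    {S T : Finset ι} (hST : S ⊆ T) (hT : ∀ i ∉ T, f i = 0) {a K γ : ℝ} (hK : 0 ≤ K)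
    (hγ : 0 < γ) (hS : γ ≤ ∑ i ∈ S, f i) (ha : a ≤ ∑ i, negMulLog (f i))
    (hTa : log #T ≤ a + K) :
    exp (-((K + 2) / γ)) * exp a ≤ #S := by
  set s := ∑ i ∈ S, f i
  have hs1 : s ≤ 1 := hf1 ▸ sum_le_sum_of_subset_of_nonneg (subset_univ S) fun i _ _ => hf i
  have hSpos : (0 : ℝ) < #S := by
    rcases S.eq_empty_or_nonempty with rfl | hne
    · simp [s] at hS; linarith
    · exact_mod_cast hne.card_pos
  have hkey : s * (a - log #S) ≤ K + 2 := by
    have := sum_negMulLog_le_of_subset hf hf1 hST hT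
    nlinarith [mul_le_mul_of_nonneg_left hTa (sub_nonneg.2 hs1)]
  have hlog : a - (K + 2) / γ ≤ log #S := by
    rcases le_or_gt a (log #S) with h | h
    · have : 0 ≤ (K + 2) / γ := by positivity
      linarith
    · rw [sub_le_comm, le_div_iff₀ hγ]
      nlinarith
  calc exp (-((K + 2) / γ)) * exp a = exp (a - (K + 2) / γ) := by rw [← exp_add]; ring_nf
    _ ≤ exp (log #S) := exp_le_exp.2 hlog
    _ = #S := exp_log hSpos

end PartitionEntropy

section Cylinders

open Finset

variable {p : ℕ} {X : Set (FullShift p)}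

/-- `entropyOf μ` is by definition the `liminf` of `partitionEntropy μ (patCyl n) / n`. -/
def patCyl (n : ℕ) (w : Fin n → Fin p) : Set (FullShift p) :=
  {x | ∀ i : Fin n, x ((i : ℕ) : ℤ) = w i}

lemma mem_patCyl_iff_spellsAt {n : ℕ} {w : Fin n → Fin p} {x : FullShift p} :
    x ∈ patCyl n w ↔ spellsAt x 0 (List.ofFn w) := by
  simp [patCyl, spellsAt_iff, Fin.forall_iff]

lemma isMeasurablePartition_patCyl (n : ℕ) : IsMeasurablePartition (patCyl (p := p) n) where
  measurableSet w := by
    simp only [patCyl, Set.ofPred_forall]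
    exact .iInter fun i => measurable_pi_apply _ (measurableSet_singleton _)
  pairwise_disjoint w w' hne := Set.disjoint_left.2 fun x hx hx' =>
    hne <| funext fun i => (hx i).symm.trans (hx' i)
  iUnion_eq_univ := Set.eq_univ_of_forall fun x => Set.mem_iUnion.2 ⟨fun i => x i, fun _ => rfl⟩

lemma patCyl_append (m n : ℕ) (u : Fin m → Fin p) (v : Fin n → Fin p) :
    patCyl (m + n) (Fin.append u v) = patCyl m u ∩ shiftMap^[m] ⁻¹' patCyl n v := by
  ext x
  simp only [patCyl, Set.mem_inter_iff, Set.mem_preimage, Set.mem_ofPred_eq, Fin.forall_fin_add,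
    Fin.append_left, Fin.append_right, shiftMap_iterate_apply, Fin.val_castAdd, Fin.val_natAdd]
  push_cast
  simp only [add_comm]

lemma subadditive_partitionEntropy_patCyl {μ : Measure (FullShift p)} [IsProbabilityMeasure μ]
    (hμ : ShiftInvariant μ) : Subadditive fun n => partitionEntropy μ (patCyl (p := p) n) := by
  intro m n
  calc partitionEntropy μ (patCyl (m + n))
      = partitionEntropy μ fun uv : (Fin m → Fin p) × (Fin n → Fin p) =>
          patCyl m uv.1 ∩ shiftMap^[m] ⁻¹' patCyl n uv.2 := by
        rw [partitionEntropy, partitionEntropy, ← (Fin.appendEquiv m n).sum_comp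
          fun w => Real.negMulLog (μ (patCyl (m + n) w)).toReal]
        refine Finset.sum_congr rfl fun uv _ => ?_
        rw [← patCyl_append]
        rfl
    _ ≤ partitionEntropy μ (patCyl m) +
          partitionEntropy μ fun v => shiftMap^[m] ⁻¹' patCyl n v :=
        partitionEntropy_inter_le μ (s := patCyl m) (t := fun v => shiftMap^[m] ⁻¹' patCyl n v)
          (isMeasurablePartition_patCyl m)
          ((isMeasurablePartition_patCyl n).preimage (measurable_shiftMap.iterate m))
    _ = partitionEntropy μ (patCyl m) + partitionEntropy μ (patCyl n) := by
        rw [partitionEntropy_preimage (hμ.measurePreserving.iterate m)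
          (isMeasurablePartition_patCyl n).measurableSet]

lemma IsMME.natCast_mul_htop_le {ν : Measure (FullShift p)}
    (hν : IsMME X ν) (n : ℕ) : n * htop X ≤ partitionEntropy ν (patCyl (p := p) n) := by
  obtain ⟨hprob, hinv, -, hent⟩ := hν
  have hu := subadditive_partitionEntropy_patCyl hinv
  have h0 : ∀ n, 0 ≤ partitionEntropy ν (patCyl (p := p) n) := fun n =>
    Finset.sum_nonneg fun w _ => Real.negMulLog_nonneg ENNReal.toReal_nonneg
      (ENNReal.toReal_le_of_le_ofReal zero_le_one (by simpa using prob_le_one))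
  have hlim : entropyOf ν = hu.lim :=
    (hu.tendsto_lim (bddBelow_range_div_of_nonneg h0)).liminf_eq
  rw [← hent, hlim]
  exact hu.natCast_mul_lim_le h0 n

lemma ofFn_mem_wordsOfLen_of_mem_patCyl {n : ℕ} {w : Fin n → Fin p} {x : FullShift p}
    (hxX : x ∈ X) (hx : x ∈ patCyl n w) : List.ofFn w ∈ wordsOfLen (language X) n :=
  ⟨⟨x, hxX, 0, mem_patCyl_iff_spellsAt.1 hx⟩, List.length_ofFn⟩

lemma ncard_wordsOfLen_language_pos (hX : X.Nonempty) (n : ℕ) :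
    0 < (wordsOfLen (language X) n).ncard := by
  obtain ⟨x, hx⟩ := hX
  exact (Set.ncard_pos (finite_wordsOfLen _ n)).2
    ⟨_, ofFn_mem_wordsOfLen_of_mem_patCyl (w := fun i => x i) hx fun _ => rfl⟩

lemma card_filter_ofFn_mem {n : ℕ} {D : Set (List (Fin p))} [DecidablePred (· ∈ D)]
    (hD : ∀ l ∈ D, l.length = n) :
    #(univ.filter fun w : Fin n → Fin p => List.ofFn w ∈ D) = D.ncard := by
  rw [← Set.ncard_coe_finset, coe_filter, ← ncard_preimage_ofFn hD]
  simp [Set.preimage]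

lemma measure_patCyl_eq_zero {ν : Measure (FullShift p)} (hνX : ν Xᶜ = 0)
    {n : ℕ} {w : Fin n → Fin p} (hw : List.ofFn w ∉ wordsOfLen (language X) n) :
    ν (patCyl n w) = 0 :=
  measure_mono_null (fun _ hx hxX => hw (ofFn_mem_wordsOfLen_of_mem_patCyl hxX hx)) hνX

lemma sum_measure_patCyl_eq {ν : Measure (FullShift p)} [IsFiniteMeasure ν]
    (hν : ShiftInvariant ν) {n : ℕ} {D : Set (List (Fin p))} [DecidablePred (· ∈ D)]
    (hD : ∀ l ∈ D, l.length = n) :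
    ∑ w ∈ univ.filter (fun w : Fin n → Fin p => List.ofFn w ∈ D), (ν (patCyl n w)).toReal =
      (ν (⋃ l ∈ D, centralCylinder l)).toReal := by
  have hunion : ⋃ w ∈ univ.filter (fun w : Fin n → Fin p => List.ofFn w ∈ D), patCyl n w =
      shiftMap^[n / 2] ⁻¹' ⋃ l ∈ D, centralCylinder l := by
    ext x
    simp only [Set.mem_iUnion, Set.mem_preimage, centralCylinder, Set.mem_ofPred_eq,
      spellsAt_shiftMap_iterate, mem_filter, mem_univ, true_and, exists_prop,
      mem_patCyl_iff_spellsAt]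
    constructor
    · rintro ⟨w, hw, hx⟩
      exact ⟨List.ofFn w, hw, by simpa using hx⟩
    · rintro ⟨l, hl, hx⟩
      obtain ⟨w, rfl⟩ := mem_range_ofFn (hD l hl)
      exact ⟨w, hl, by simpa [hD _ hl] using hx⟩
  have hU : MeasurableSet (⋃ l ∈ D, centralCylinder l) :=
    ((List.finite_length_eq (Fin p) n).subset hD).measurableSet_biUnion fun l _ =>
      measurableSet_setOf_spellsAt _ l
  rw [← ENNReal.toReal_sum fun _ _ => measure_ne_top ν _, ← measure_biUnion_finset
    (fun w _ w' _ hne => (isMeasurablePartition_patCyl n).pairwise_disjoint hne)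
    fun w _ => (isMeasurablePartition_patCyl n).measurableSet w, hunion,
    (hν.measurePreserving.iterate _).measure_preimage hU.nullMeasurableSet]

end Cylinders

/-- **Lemma 5.6.** Under Conditions (I) and (II), for every `γ ∈ (0,1)` there is `C₉ > 0`
such that for every measure of maximal entropy `ν`, every `n`, and every collection
`𝓓_n ⊆ 𝓛_n` whose cylinders have total `ν`-measure at least `γ`, one has
`#𝓓_n ≥ C₉ e^{n h(𝓛)}`. -/
theorem card_of_positive_measure_collection {p : ℕ} (X : Set (FullShift p))
    (hX : IsShiftSpace X) (Cp G Cs : Set (List (Fin p)))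
    (hdec : Decomp (language X) Cp G Cs)
    (hI : ∃ t : ℕ, HasSpecS (language X) G t)
    (hII : growth (Cp ∪ Cs) < htop X)
    (γ : ℝ) (hγ : γ ∈ Set.Ioo (0 : ℝ) 1) :
    ∃ C₉ : ℝ, 0 < C₉ ∧ ∀ ν : MeasureTheory.Measure (FullShift p), IsMME X ν →
      ∀ (n : ℕ) (D : Set (List (Fin p))), D ⊆ wordsOfLen (language X) n →
        ENNReal.ofReal γ ≤ ν (⋃ w ∈ D, centralCylinder w) →
        C₉ * Real.exp ((n : ℝ) * htop X) ≤ (D.ncard : ℝ) := by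
  classical
  obtain ⟨C, hC1, hC⟩ := exists_ncard_wordsOfLen_le_mul_exp hdec hI hII
  refine ⟨Real.exp (-((Real.log C + 2) / γ)), Real.exp_pos _, fun ν hν n D hD hmass => ?_⟩
  have := hν.1
  have hlen : ∀ E ⊆ wordsOfLen (language X) n, ∀ l ∈ E, l.length = n := fun E hE l hl => (hE hl).2
  have hLpos : (0 : ℝ) < (wordsOfLen (language X) n).ncard := by
    exact_mod_cast ncard_wordsOfLen_language_pos hX.1 n
  have hνX : ν Xᶜ = 0 := by
    rw [measure_compl hX.2.1.measurableSet (measure_ne_top ν X), hν.2.2.1, measure_univ, tsub_self]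
  rw [← card_filter_ofFn_mem (hlen D hD)]
  refine exp_mul_exp_le_card_of_mass (f := fun w => (ν (patCyl n w)).toReal)
    (T := Finset.univ.filter fun w => List.ofFn w ∈ wordsOfLen (language X) n)
    (fun _ => ENNReal.toReal_nonneg) ?_ (Finset.monotone_filter_right _ fun _ _ hw => hD hw) ?_
    (Real.log_nonneg hC1) hγ.1 ?_ (hν.natCast_mul_htop_le n) ?_
  · simpa using (isMeasurablePartition_patCyl n).sum_measure_inter ν MeasurableSet.univ
  · intro w hw
    simp [measure_patCyl_eq_zero hνX (by simpa using hw)]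
  · rw [sum_measure_patCyl_eq hν.2.1 (hlen D hD)]
    exact (ENNReal.ofReal_le_iff_le_toReal (measure_ne_top ν _)).1 hmass
  · rw [card_filter_ofFn_mem (hlen _ subset_rfl)]
    calc _ ≤ Real.log (C * Real.exp (n * htop X)) := Real.log_le_log hLpos (hC n)
      _ = _ := by rw [Real.log_mul (by positivity) (Real.exp_pos _).ne', Real.log_exp, add_comm]
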